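/- Under the two-stage randomized design with J_a ≥ 2 for all mechanisms a, if the cluster-level average potential outcomes are constant across clusters, i.e. Ȳ_j(z,a) does not depend on j for every z ∈ {0,1} and every mechanism a, then the block-diagonal covariance estimator is exactly unbiased: E[D̂] = D, where D = J · cov(Ŷ). -/

import Mathlib

/-!
Given the first-stage assignment `A`, the second-stage randomizations of the clusters are
independent, and when the cluster means are constant every `Ŷ_j(z)` with `A_j = a` has the same
conditional mean `μ(z,a)` (the mean over a uniformly random subset of fixed size is unbiased for
the mean over the whole set). So, given `A`, `(Ŷ(1,a), Ŷ(0,a))` is the average of `J_a`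
independent vectors with a common mean: its conditional covariance is `J_a⁻² ∑_j C_j`, where
`C_j` is the covariance of `(Ŷ_j(1), Ŷ_j(0))` under the second-stage randomization, while
the sample covariance `σ̂_b²(·,·;a)` has conditional mean `J_a⁻¹ ∑_j C_j`. Different
mechanisms use disjoint sets of clusters, so their conditional covariance vanishes. Since the
conditional means do not depend on `A`, the law of total covariance makes `cov(Ŷ)` the average
over `A` of the conditional covariances, and this matches `E[D̂] / J` entry by entry.
-/

open scoped BigOperators

noncomputable section

/-- A two-stage randomized design: `J` clusters, the `j`-th of size `n j`,
`m` treatment assignment mechanisms, `Jc a` clusters assigned to mechanism `a`,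
`n1 j a` treated units in cluster `j` under mechanism `a`, and fixed potential
outcomes `Y j i z a` (with `z : Bool`, `true` = treatment). -/
structure TwoStageDesign where
  J : ℕ
  m : ℕ
  n : Fin J → ℕ
  Jc : Fin m → ℕ
  n1 : Fin J → Fin m → ℕ
  Y : (j : Fin J) → Fin (n j) → Bool → Fin m → ℝ

namespace TwoStageDesign

variable (d : TwoStageDesign)

/-- The number of units in cluster `j` assigned to condition `z` under mechanism `a`. -/
def nz (z : Bool) (j : Fin d.J) (a : Fin d.m) : ℕ :=
  if z then d.n1 j a else d.n j - d.n1 j a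

/-- Admissible first-stage assignments: mechanism `a` is given to exactly `Jc a` clusters. -/
def mechA : Finset (Fin d.J → Fin d.m) :=
  Finset.univ.filter fun A => ∀ a, (Finset.univ.filter fun j => A j = a).card = d.Jc a

/-- Admissible second-stage assignments given the first stage `A`: the treated set in
cluster `j` has exactly `n1 j (A j)` units. -/
def treatA (A : Fin d.J → Fin d.m) : Finset ((j : Fin d.J) → Finset (Fin (d.n j))) :=
  Finset.univ.filter fun S => ∀ j, (S j).card = d.n1 j (A j)

/-- Expectation with respect to the two-stage randomization: `A` is uniform on the
admissible first-stage assignments and, given `A`, the treated sets are uniform on the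
admissible second-stage assignments (independently across clusters). -/
def expec (f : (Fin d.J → Fin d.m) → ((j : Fin d.J) → Finset (Fin (d.n j))) → ℝ) : ℝ :=
  ∑ A ∈ d.mechA, ∑ S ∈ d.treatA A,
    f A S / ((d.mechA.card : ℝ) * ((d.treatA A).card : ℝ))

/-- Covariance under the two-stage randomization. -/
def cov (f g : (Fin d.J → Fin d.m) → ((j : Fin d.J) → Finset (Fin (d.n j))) → ℝ) : ℝ :=
  d.expec fun A S => (f A S - d.expec f) * (g A S - d.expec g)

/-- Variance under the two-stage randomization. -/
def var (f : (Fin d.J → Fin d.m) → ((j : Fin d.J) → Finset (Fin (d.n j))) → ℝ) : ℝ :=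
  d.cov f f

/-- Observed outcome of unit `i` in cluster `j`: `Y_{ij} = Y_{ij}(Z_{ij}, A_j)`. -/
def Yobs (A : Fin d.J → Fin d.m) (S : (j : Fin d.J) → Finset (Fin (d.n j)))
    (j : Fin d.J) (i : Fin (d.n j)) : ℝ :=
  d.Y j i (decide (i ∈ S j)) (A j)

/-- `Ŷ_j(z)`: average observed outcome among units of cluster `j` with `Z_{ij} = z`. -/
def hatYj (A : Fin d.J → Fin d.m) (S : (j : Fin d.J) → Finset (Fin (d.n j)))
    (z : Bool) (j : Fin d.J) : ℝ :=
  (∑ i ∈ Finset.univ.filter (fun i => decide (i ∈ S j) = z), d.Yobs A S j i) /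
    ((Finset.univ.filter (fun i : Fin (d.n j) => decide (i ∈ S j) = z)).card : ℝ)

/-- `Ŷ(z,a)`: average of `Ŷ_j(z)` over clusters with `A_j = a`. -/
def hatY (A : Fin d.J → Fin d.m) (S : (j : Fin d.J) → Finset (Fin (d.n j)))
    (z : Bool) (a : Fin d.m) : ℝ :=
  (∑ j ∈ Finset.univ.filter (fun j => A j = a), d.hatYj A S z j) / (d.Jc a : ℝ)

/-- `Ȳ_j(z,a)`: cluster-level average potential outcome. -/
def Ybarj (j : Fin d.J) (z : Bool) (a : Fin d.m) : ℝ :=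
  (∑ i, d.Y j i z a) / (d.n j : ℝ)

/-- `Ȳ(z,a)`: population-level average potential outcome. -/
def Ybar (z : Bool) (a : Fin d.m) : ℝ :=
  (∑ j, d.Ybarj j z a) / (d.J : ℝ)

/-- `σ_j²(z,z';a,a')`: within-cluster covariance of the potential outcomes. -/
def sigU (j : Fin d.J) (z z' : Bool) (a a' : Fin d.m) : ℝ :=
  (∑ i, (d.Y j i z a - d.Ybarj j z a) * (d.Y j i z' a' - d.Ybarj j z' a')) /
    ((d.n j : ℝ) - 1)

/-- `σ_b²(z,z';a,a')`: between-cluster covariance of the cluster averages. -/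
def sigB (z z' : Bool) (a a' : Fin d.m) : ℝ :=
  (∑ j, (d.Ybarj j z a - d.Ybar z a) * (d.Ybarj j z' a' - d.Ybar z' a')) /
    ((d.J : ℝ) - 1)

/-- `σ̂_b²(z,z';a)`: between-cluster sample covariance among clusters with `A_j = a`. -/
def sigBhat (A : Fin d.J → Fin d.m) (S : (j : Fin d.J) → Finset (Fin (d.n j)))
    (z z' : Bool) (a : Fin d.m) : ℝ :=
  (∑ j ∈ Finset.univ.filter (fun j => A j = a),
      (d.hatYj A S z j - d.hatY A S z a) * (d.hatYj A S z' j - d.hatY A S z' a)) /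
    ((d.Jc a : ℝ) - 1)

end TwoStageDesign

open Finset TwoStageDesign

section UniformAverages

variable {K : Type*} [Field K] [CharZero K]

def uniformCov {α : Type*} (s : Finset α) (f g : α → K) : K :=
  𝔼 x ∈ s, f x * g x - (𝔼 x ∈ s, f x) * 𝔼 x ∈ s, g x

lemma sum_sub_expect_mul_sub_expect {α : Type*} (s : Finset α) (x y : α → K) :
    ∑ i ∈ s, (x i - 𝔼 k ∈ s, x k) * (y i - 𝔼 k ∈ s, y k)
      = ∑ i ∈ s, x i * y i - #s * ((𝔼 i ∈ s, x i) * 𝔼 i ∈ s, y i) := by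
  simp only [sub_mul, mul_sub, sum_sub_distrib, ← sum_mul, ← mul_sum, sum_const, nsmul_eq_mul]
  rw [← card_mul_expect s x, ← card_mul_expect s y]
  ring

section PiFinset

variable {ι : Type*} [Fintype ι] [DecidableEq ι] {δ : ι → Type*}

lemma expect_piFinset_prod (t : ∀ i, Finset (δ i)) (f : ∀ i, δ i → K) :
    𝔼 S ∈ Fintype.piFinset t, ∏ i, f i (S i) = ∏ i, 𝔼 x ∈ t i, f i x := by
  simp only [expect_eq_sum_div_card, ← prod_univ_sum, Fintype.card_piFinset, Nat.cast_prod,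
    prod_div_distrib]

variable {t : ∀ i, Finset (δ i)}

lemma expect_piFinset_apply (ht : ∀ i, (t i).Nonempty) (j : ι) (f : δ j → K) :
    𝔼 S ∈ Fintype.piFinset t, f (S j) = 𝔼 x ∈ t j, f x := by
  have h := expect_piFinset_prod t (Function.update (fun _ _ => 1) j f)
  rw [Fintype.prod_eq_single j fun i hi => by simp [ht i, hi],
    expect_congr rfl fun S _ => Fintype.prod_eq_single j fun i hi => by simp [hi]] at h
  simpa only [Function.update_self] using h

lemma expect_piFinset_apply_mul_apply (ht : ∀ i, (t i).Nonempty) {j j' : ι} (hj : j ≠ j')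
    (f : δ j → K) (g : δ j' → K) :
    𝔼 S ∈ Fintype.piFinset t, f (S j) * g (S j')
      = (𝔼 x ∈ t j, f x) * 𝔼 x ∈ t j', g x := by
  have h := expect_piFinset_prod t (Function.update (Function.update (fun _ _ => 1) j f) j' g)
  rw [Fintype.prod_eq_mul j j' hj fun i hi => by simp [ht i, hi.1, hi.2],
    expect_congr rfl fun S _ => Fintype.prod_eq_mul j j' hj fun i hi => by simp [hi.1, hi.2]] at h
  simpa only [Function.update_self, Function.update_of_ne hj] using h

lemma expect_piFinset_apply_mul_apply_eq (ht : ∀ i, (t i).Nonempty) (X Y : ∀ i, δ i → K)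
    (i i' : ι) :
    𝔼 S ∈ Fintype.piFinset t, X i (S i) * Y i' (S i')
      = (𝔼 x ∈ t i, X i x) * (𝔼 x ∈ t i', Y i' x)
        + if i = i' then uniformCov (t i) (X i) (Y i) else 0 := by
  obtain rfl | hi := eq_or_ne i i'
  · rw [expect_piFinset_apply ht i fun x => X i x * Y i x, if_pos rfl, uniformCov]
    ring
  · rw [expect_piFinset_apply_mul_apply ht hi, if_neg hi, add_zero]

lemma expect_piFinset_sum_mul_sum (ht : ∀ i, (t i).Nonempty) (X Y : ∀ i, δ i → K)
    (s₁ s₂ : Finset ι) :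
    𝔼 S ∈ Fintype.piFinset t, (∑ i ∈ s₁, X i (S i)) * (∑ i ∈ s₂, Y i (S i))
      = (∑ i ∈ s₁, 𝔼 x ∈ t i, X i x) * (∑ i ∈ s₂, 𝔼 x ∈ t i, Y i x)
        + ∑ i ∈ s₁ ∩ s₂, uniformCov (t i) (X i) (Y i) := by
  simp only [sum_mul_sum, expect_sum_comm, expect_piFinset_apply_mul_apply_eq ht,
    sum_add_distrib, sum_ite_eq, ← sum_filter, filter_mem_eq_inter]

lemma expect_piFinset_expect_mul_expect (ht : ∀ i, (t i).Nonempty) (X Y : ∀ i, δ i → K)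
    {s₁ s₂ : Finset ι} (hs₁ : s₁.Nonempty) (hs₂ : s₂.Nonempty) {μ ν : K}
    (hX : ∀ i ∈ s₁, 𝔼 x ∈ t i, X i x = μ)
    (hY : ∀ i ∈ s₂, 𝔼 x ∈ t i, Y i x = ν) :
    𝔼 S ∈ Fintype.piFinset t, (𝔼 i ∈ s₁, X i (S i)) * (𝔼 i ∈ s₂, Y i (S i))
      = μ * ν + (∑ i ∈ s₁ ∩ s₂, uniformCov (t i) (X i) (Y i)) / (#s₁ * #s₂) := by
  have h₁ : (#s₁ : K) ≠ 0 := by exact_mod_cast hs₁.card_ne_zero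
  have h₂ : (#s₂ : K) ≠ 0 := by exact_mod_cast hs₂.card_ne_zero
  simp only [expect_eq_sum_div_card s₁, expect_eq_sum_div_card s₂, div_mul_div_comm]
  rw [← expect_div, expect_piFinset_sum_mul_sum ht, sum_congr rfl hX, sum_congr rfl hY]
  simp only [sum_const, nsmul_eq_mul]
  field_simp

lemma expect_piFinset_sampleCov (ht : ∀ i, (t i).Nonempty) (X Y : ∀ i, δ i → K)
    {s : Finset ι} (hs : 2 ≤ #s) {μ ν : K}
    (hX : ∀ i ∈ s, 𝔼 x ∈ t i, X i x = μ) (hY : ∀ i ∈ s, 𝔼 x ∈ t i, Y i x = ν) :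
    𝔼 S ∈ Fintype.piFinset t,
        (∑ i ∈ s, (X i (S i) - 𝔼 k ∈ s, X k (S k)) * (Y i (S i) - 𝔼 k ∈ s, Y k (S k)))
          / (#s - 1)
      = (∑ i ∈ s, uniformCov (t i) (X i) (Y i)) / #s := by
  have hs₀ : s.Nonempty := card_pos.1 (by omega)
  have hk : (#s : K) - 1 ≠ 0 := by
    rw [sub_ne_zero]; exact_mod_cast (by omega : #s ≠ 1)
  have hk₀ : (#s : K) ≠ 0 := by exact_mod_cast hs₀.card_ne_zero
  have hXY : ∀ i ∈ s, 𝔼 x ∈ t i, X i x * Y i x = uniformCov (t i) (X i) (Y i) + μ * ν :=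
    fun i hi => by rw [uniformCov, hX i hi, hY i hi, sub_add_cancel]
  simp only [sum_sub_expect_mul_sub_expect, ← expect_div, expect_sub_distrib, expect_sum_comm,
    ← mul_expect]
  rw [expect_piFinset_expect_mul_expect ht X Y hs₀ hs₀ hX hY, inter_self,
    sum_congr rfl fun i hi => (expect_piFinset_apply ht i fun x => X i x * Y i x).trans
      (hXY i hi), sum_add_distrib, sum_const, nsmul_eq_mul]
  field_simp
  ring

end PiFinset

section PowersetCard

variable {α : Type*} [DecidableEq α]

lemma card_filter_mem_powersetCard {u : Finset α} {k : ℕ} (hk : 0 < k) {i : α} (hi : i ∈ u) :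
    #{s ∈ u.powersetCard k | i ∈ s} = (#u - 1).choose (k - 1) := by
  simpa using card_filter_powersetCard_subset {i} u k (by simpa) (by simpa)

lemma expect_powersetCard_expect (u : Finset α) {k : ℕ} (hk₀ : 0 < k) (hk : k ≤ #u)
    (f : α → K) :
    𝔼 s ∈ u.powersetCard k, 𝔼 i ∈ s, f i = 𝔼 i ∈ u, f i := by
  obtain ⟨N, hN⟩ : ∃ N, #u = N + 1 := ⟨#u - 1, by omega⟩
  obtain ⟨k, rfl⟩ : ∃ k', k = k' + 1 := ⟨k - 1, by omega⟩
  have hcount : ∀ i ∈ u, #{s ∈ u.powersetCard (k + 1) | i ∈ s} = N.choose k := by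
    intro i hi
    rw [card_filter_mem_powersetCard hk₀ hi, hN, Nat.add_sub_cancel, Nat.add_sub_cancel]
  have hchoose : ((N + 1 : ℕ) : K) * N.choose k = (N + 1).choose (k + 1) * (k + 1 : ℕ) := by
    exact_mod_cast Nat.add_one_mul_choose_eq N k
  have hC : ((N + 1).choose (k + 1) : K) ≠ 0 := by
    exact_mod_cast (Nat.choose_pos (by omega)).ne'
  have hc : (N.choose k : K) ≠ 0 := by
    exact_mod_cast (Nat.choose_pos (by omega)).ne'
  calc 𝔼 s ∈ u.powersetCard (k + 1), 𝔼 i ∈ s, f i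
      = (∑ s ∈ u.powersetCard (k + 1), ∑ i ∈ s, f i)
          / (#(u.powersetCard (k + 1)) * (k + 1 : ℕ)) := by
        rw [← div_div, ← expect_eq_sum_div_card, expect_div]
        exact expect_congr rfl fun s hs => by
          rw [expect_eq_sum_div_card, (mem_powersetCard.1 hs).2]
    _ = (∑ i ∈ u, N.choose k * f i) / ((N + 1).choose (k + 1) * (k + 1 : ℕ)) := by
        rw [sum_comm' (s' := fun i => {s ∈ u.powersetCard (k + 1) | i ∈ s}) (t' := u)
          fun s i => by simp only [mem_filter, mem_powersetCard]; grind, card_powersetCard, hN]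
        refine congrArg (· / _) (sum_congr rfl fun i hi => ?_)
        rw [sum_const, hcount i hi, nsmul_eq_mul]
    _ = 𝔼 i ∈ u, f i := by
        rw [← mul_sum, expect_eq_sum_div_card, hN, ← hchoose]
        field_simp

lemma expect_powersetCard_expect_compl [Fintype α] {k : ℕ} (hk : k < Fintype.card α)
    (f : α → K) :
    𝔼 s ∈ univ.powersetCard k, 𝔼 i ∈ sᶜ, f i = 𝔼 i, f i := by
  rw [← expect_powersetCard_expect univ (k := Fintype.card α - k) (by omega) (by simp)]
  refine expect_nbij' compl compl (fun s hs => ?_) (fun s hs => ?_) (by simp) (by simp)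
    (fun _ _ => rfl)
  all_goals
    simp only [mem_powersetCard_univ, card_compl] at hs ⊢
    omega

end PowersetCard

end UniformAverages

namespace TwoStageDesign

variable (d : TwoStageDesign)

def treated (j : Fin d.J) (a : Fin d.m) : Finset (Finset (Fin (d.n j))) :=
  univ.powersetCard (d.n1 j a)

def groupMean (j : Fin d.J) (a : Fin d.m) (z : Bool) (s : Finset (Fin (d.n j))) : ℝ :=
  𝔼 i ∈ {i | decide (i ∈ s) = z}, d.Y j i z a

def clusterCov (j : Fin d.J) (a : Fin d.m) (z z' : Bool) : ℝ :=
  uniformCov (d.treated j a) (d.groupMean j a z) (d.groupMean j a z')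

lemma hatYj_eq_groupMean (A : Fin d.J → Fin d.m) (S : (j : Fin d.J) → Finset (Fin (d.n j)))
    (z : Bool) (j : Fin d.J) : d.hatYj A S z j = d.groupMean j (A j) z (S j) := by
  rw [hatYj, groupMean, expect_eq_sum_div_card]
  congr 1
  exact sum_congr rfl fun i hi => by rw [Yobs, (mem_filter.1 hi).2]

lemma treatA_eq_piFinset (A : Fin d.J → Fin d.m) :
    d.treatA A = Fintype.piFinset fun j => d.treated j (A j) := by
  ext S
  simp [treatA, treated, Fintype.mem_piFinset]

lemma treated_nonempty (hhi : ∀ j a, d.n1 j a ≤ d.n j - 1) (j : Fin d.J) (a : Fin d.m) :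
    (d.treated j a).Nonempty :=
  powersetCard_nonempty.2 (by simpa using (hhi j a).trans (Nat.sub_le _ _))

lemma expect_groupMean {j : Fin d.J} {a : Fin d.m} (hlo : 1 ≤ d.n1 j a)
    (hhi : d.n1 j a ≤ d.n j - 1) (z : Bool) :
    𝔼 s ∈ d.treated j a, d.groupMean j a z s = d.Ybarj j z a := by
  have hYbar : d.Ybarj j z a = 𝔼 i, d.Y j i z a := by
    rw [Ybarj, Fintype.expect_eq_sum_div_card, Fintype.card_fin]
  rw [hYbar, treated]
  cases z with
  | true =>
    simp only [groupMean, decide_eq_true_eq, filter_mem_eq_inter, univ_inter]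
    exact expect_powersetCard_expect univ hlo (by simp; omega) _
  | false =>
    simp only [groupMean, decide_eq_false_iff_not, ← compl_filter, filter_mem_eq_inter,
      univ_inter]
    exact expect_powersetCard_expect_compl (by simp; omega) _

lemma treatA_nonempty (hhi : ∀ j a, d.n1 j a ≤ d.n j - 1) (A : Fin d.J → Fin d.m) :
    (d.treatA A).Nonempty := by
  rw [treatA_eq_piFinset, Fintype.piFinset_nonempty]
  exact fun j => d.treated_nonempty hhi j (A j)

lemma expec_eq_expect
    (f : (Fin d.J → Fin d.m) → ((j : Fin d.J) → Finset (Fin (d.n j))) → ℝ) :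
    d.expec f = 𝔼 A ∈ d.mechA, 𝔼 S ∈ d.treatA A, f A S := by
  simp only [expec, expect_eq_sum_div_card, sum_div, div_div, mul_comm]

/-- Law of total covariance when the conditional means given the first stage are constant. -/
lemma cov_eq_expect_of_condMean
    {f g : (Fin d.J → Fin d.m) → ((j : Fin d.J) → Finset (Fin (d.n j))) → ℝ} {μ ν : ℝ}
    (hT : ∀ A ∈ d.mechA, (d.treatA A).Nonempty)
    (hf : ∀ A ∈ d.mechA, 𝔼 S ∈ d.treatA A, f A S = μ)
    (hg : ∀ A ∈ d.mechA, 𝔼 S ∈ d.treatA A, g A S = ν) :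
    d.cov f g = 𝔼 A ∈ d.mechA, (𝔼 S ∈ d.treatA A, f A S * g A S - μ * ν) := by
  rcases d.mechA.eq_empty_or_nonempty with h | h
  · simp [cov, expec_eq_expect, h]
  have hEf : d.expec f = μ := by rw [expec_eq_expect, expect_congr rfl hf, expect_const h]
  have hEg : d.expec g = ν := by rw [expec_eq_expect, expect_congr rfl hg, expect_const h]
  rw [cov, expec_eq_expect, hEf, hEg]
  refine expect_congr rfl fun A hA => ?_
  simp only [sub_mul, mul_sub, expect_sub_distrib, ← mul_expect, ← expect_mul, hf A hA, hg A hA,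
    expect_const (hT A hA)]
  ring

section FirstStage

variable {d} {A : Fin d.J → Fin d.m} (hA : A ∈ d.mechA)
include hA

lemma card_filter_eq_Jc (a : Fin d.m) : #{j | A j = a} = d.Jc a :=
  (mem_filter.1 hA).2 a

lemma hatY_eq_expect (S : (j : Fin d.J) → Finset (Fin (d.n j))) (z : Bool) (a : Fin d.m) :
    d.hatY A S z a = 𝔼 j ∈ {j | A j = a}, d.groupMean j (A j) z (S j) := by
  rw [hatY, expect_eq_sum_div_card, card_filter_eq_Jc hA]
  simp only [hatYj_eq_groupMean]

lemma sigBhat_eq (S : (j : Fin d.J) → Finset (Fin (d.n j))) (z z' : Bool) (a : Fin d.m) :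
    d.sigBhat A S z z' a
      = (∑ j ∈ {j | A j = a},
          (d.groupMean j (A j) z (S j) - 𝔼 k ∈ {j | A j = a}, d.groupMean k (A k) z (S k))
            * (d.groupMean j (A j) z' (S j)
              - 𝔼 k ∈ {j | A j = a}, d.groupMean k (A k) z' (S k)))
        / (#{j | A j = a} - 1) := by
  rw [sigBhat, card_filter_eq_Jc hA]
  simp only [hatYj_eq_groupMean, hatY_eq_expect hA]

end FirstStage

section ConstantMeans

variable {d} (hlo : ∀ j a, 1 ≤ d.n1 j a) (hhi : ∀ j a, d.n1 j a ≤ d.n j - 1)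
  {μ : Bool → Fin d.m → ℝ} (hμ : ∀ j z a, d.Ybarj j z a = μ z a)
  {A : Fin d.J → Fin d.m} (hA : A ∈ d.mechA)
include hlo hhi hμ hA

omit hA in
lemma expect_groupMean_of_mem (z : Bool) (a : Fin d.m) :
    ∀ j ∈ ({j | A j = a} : Finset _),
      𝔼 s ∈ d.treated j (A j), d.groupMean j (A j) z s = μ z a :=
  fun j hj => by
    rw [expect_groupMean d (hlo j (A j)) (hhi j (A j)), hμ, (mem_filter.1 hj).2]

lemma expect_treatA_hatY (z : Bool) {a : Fin d.m} (ha : 0 < d.Jc a) :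
    𝔼 S ∈ d.treatA A, d.hatY A S z a = μ z a := by
  have hK : ({j | A j = a} : Finset _).Nonempty := by
    rw [← card_pos, card_filter_eq_Jc hA]; exact ha
  simp only [hatY_eq_expect hA]
  rw [expect_comm, treatA_eq_piFinset, expect_congr rfl fun j hj =>
    (expect_piFinset_apply (fun i => d.treated_nonempty hhi i (A i)) j _).trans
      (expect_groupMean_of_mem hlo hhi hμ z a j hj), expect_const hK]

lemma expect_treatA_hatY_mul_hatY (z z' : Bool) {a a' : Fin d.m} (ha : 0 < d.Jc a)
    (ha' : 0 < d.Jc a') :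
    𝔼 S ∈ d.treatA A, d.hatY A S z a * d.hatY A S z' a'
      = μ z a * μ z' a'
        + (∑ j ∈ {j | A j = a ∧ A j = a'}, d.clusterCov j (A j) z z')
          / (d.Jc a * d.Jc a') := by
  simp only [hatY_eq_expect hA]
  rw [treatA_eq_piFinset, expect_piFinset_expect_mul_expect
    (fun i => d.treated_nonempty hhi i (A i)) _ _
    (by rw [← card_pos, card_filter_eq_Jc hA]; exact ha)
    (by rw [← card_pos, card_filter_eq_Jc hA]; exact ha')
    (expect_groupMean_of_mem hlo hhi hμ z a) (expect_groupMean_of_mem hlo hhi hμ z' a'),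
    card_filter_eq_Jc hA, card_filter_eq_Jc hA, filter_and]
  rfl

lemma expect_treatA_sigBhat (z z' : Bool) {a : Fin d.m} (ha : 2 ≤ d.Jc a) :
    𝔼 S ∈ d.treatA A, d.sigBhat A S z z' a
      = (∑ j ∈ {j | A j = a}, d.clusterCov j (A j) z z') / d.Jc a := by
  simp only [sigBhat_eq hA]
  rw [treatA_eq_piFinset, expect_piFinset_sampleCov
    (fun i => d.treated_nonempty hhi i (A i)) _ _ (by rwa [card_filter_eq_Jc hA])
    (expect_groupMean_of_mem hlo hhi hμ z a) (expect_groupMean_of_mem hlo hhi hμ z' a),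
    card_filter_eq_Jc hA]
  rfl

end ConstantMeans

end TwoStageDesign

theorem Dhat_unbiased_of_const_general (d : TwoStageDesign)
    (hJ : 2 ≤ d.J)
    (hJc : ∀ a, 2 ≤ d.Jc a)
    (hn1lo : ∀ j a, 1 ≤ d.n1 j a) (hn1hi : ∀ j a, d.n1 j a ≤ d.n j - 1)
    (hconst : ∀ (j j' : Fin d.J) (z : Bool) (a : Fin d.m), d.Ybarj j z a = d.Ybarj j' z a) :
    ∀ p q : Fin d.m × Bool,
      (if p.1 = q.1 then
          d.expec (fun A S => ((d.J : ℝ) / (d.Jc p.1 : ℝ)) * d.sigBhat A S p.2 q.2 p.1)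
        else 0) =
      (d.J : ℝ) *
        d.cov (fun A S => d.hatY A S p.2 p.1) (fun A S => d.hatY A S q.2 q.1) := by
  rintro ⟨a, z⟩ ⟨a', z'⟩
  have hμ : ∀ j z a, d.Ybarj j z a = d.Ybarj ⟨0, by omega⟩ z a := fun j z a => hconst j _ z a
  have hpos : ∀ a, 0 < d.Jc a := fun a => zero_lt_two.trans_le (hJc a)
  rw [d.cov_eq_expect_of_condMean (fun A _ => d.treatA_nonempty hn1hi A)
    (fun A hA => expect_treatA_hatY hn1lo hn1hi hμ hA z (hpos a))
    (fun A hA => expect_treatA_hatY hn1lo hn1hi hμ hA z' (hpos a')), mul_expect]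
  split_ifs with haa
  · subst haa
    rw [expec_eq_expect]
    refine expect_congr rfl fun A hA => ?_
    rw [← mul_expect, expect_treatA_sigBhat hn1lo hn1hi hμ hA z z' (hJc a),
      expect_treatA_hatY_mul_hatY hn1lo hn1hi hμ hA z z' (hpos a) (hpos a)]
    simp only [and_self]
    have hJa : (d.Jc a : ℝ) ≠ 0 := by exact_mod_cast (hpos a).ne'
    field_simp
    ring
  · refine (expect_eq_zero fun A hA => ?_).symm
    rw [expect_treatA_hatY_mul_hatY hn1lo hn1hi hμ hA z z' (hpos a) (hpos a'),
      filter_eq_empty_iff.2 fun j _ h => haa (h.1.symm.trans h.2), sum_empty]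
    ring

/-- **Unbiasedness of the covariance estimator under constant cluster means
(Theorem 3, second part).** Under the two-stage randomized design with `J_a ≥ 2`
for all mechanisms `a`, if the cluster-level average potential outcomes `Ȳ_j(z,a)`
do not depend on the cluster `j`, then `E[D̂] = D`, where `D = J·cov(Ŷ)` and rows and
columns are indexed by pairs `(a, z)`. -/
theorem Dhat_unbiased_of_const (d : TwoStageDesign)
    (hJ : 2 ≤ d.J) (hn : ∀ j, 2 ≤ d.n j)
    (hJc : ∀ a, 2 ≤ d.Jc a) (hJsum : ∑ a, d.Jc a = d.J)
    (hn1lo : ∀ j a, 1 ≤ d.n1 j a) (hn1hi : ∀ j a, d.n1 j a ≤ d.n j - 1)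
    (hconst : ∀ (j j' : Fin d.J) (z : Bool) (a : Fin d.m), d.Ybarj j z a = d.Ybarj j' z a) :
    ∀ p q : Fin d.m × Bool,
      (if p.1 = q.1 then
          d.expec (fun A S => ((d.J : ℝ) / (d.Jc p.1 : ℝ)) * d.sigBhat A S p.2 q.2 p.1)
        else 0) =
      (d.J : ℝ) *
        d.cov (fun A S => d.hatY A S p.2 p.1) (fun A S => d.hatY A S q.2 q.1) :=
  Dhat_unbiased_of_const_general d hJ hJc hn1lo hn1hi hconst
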